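/- For any connected CW-complex X, cat(X) ≤ Cat(X), where Cat(X) is the cone-length: the least m such that there is a sequence of cofibrations K_i → F_{i-1} → F_i (1 ≤ i ≤ m) with F_0 = * and F_m ≃ X. -/

import Mathlib

/-!
Each cone attached in a cone-decomposition raises `cat` by at most one. If `A` is covered by
`n + 1` open sets contractible in `A`, cover the mapping cone `A ∪_f CK` by the open cone
`{height < 1}`, which contracts to the apex, and by the `n + 1` sets of points of positive height
whose projection to `A` lies in one of the given sets: these slide along the cone lines into `A`
and are then contracted there. As `cat` is a homotopy invariant and a point has `cat = 0`,
induction along the decomposition gives `cat X ≤ m`.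
-/

universe u

/-- The gluing relation for the mapping cone of `f : K → A`: the cone coordinate `1` end of
`K × I` is glued to `A` along `f`, and the `0` end is collapsed to the cone point. -/
inductive ConeRel {K A : Type u} (f : K → A) :
    (K × unitInterval) ⊕ A → (K × unitInterval) ⊕ A → Prop
  | glue (k : K) : ConeRel f (Sum.inl (k, 1)) (Sum.inr (f k))
  | apex (k k' : K) : ConeRel f (Sum.inl (k, 0)) (Sum.inl (k', 0))

/-- The mapping cone `A ∪_f CK` of `f : K → A`. -/
abbrev MappingCone {K A : Type u} (f : K → A) : Type u := Quot (ConeRel f)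

/-- The canonical inclusion of the base `A` into the mapping cone of `f : K → A`. -/
def MappingCone.incl {K A : Type u} (f : K → A) (a : A) : MappingCone f :=
  Quot.mk _ (Sum.inr a)

/-- A cone-decomposition of `X` of length `m`: a sequence of cofibrations
`K_i → F_{i-1} ↪ F_i` (each `F_i` is the mapping cone of a map `K_i → F_{i-1}`),
with `F_0 = *` and `F_m ≃ X`.  Its existence for some `m` says `Cat(X) ≤ m`. -/
structure ConeDecomp (X : Type u) [TopologicalSpace X] (m : ℕ) where
  /-- The filtration spaces `F_0, …, F_m`. -/
  F : Fin (m + 1) → TopCat.{u}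
  /-- The attaching spaces `K_1, …, K_m`. -/
  K : Fin m → TopCat.{u}
  /-- The attaching maps `h_i : K_i → F_{i-1}`. -/
  h : ∀ i : Fin m, C(K i, F i.castSucc)
  /-- `F_0` is a one-point space. -/
  F0 : Unique (F 0)
  /-- Each `F_i` is the mapping cone of `h_i`. -/
  cone : ∀ i : Fin m, F i.succ ≃ₜ MappingCone ⇑(h i)
  /-- `F_m` has the homotopy type of `X`. -/
  equiv : ContinuousMap.HomotopyEquiv (F (Fin.last m)) X

/-- A subset `U` of `X` is contractible in `X` if the inclusion `U ↪ X` is homotopic to a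
constant map. -/
def ContractibleIn {X : Type u} [TopologicalSpace X] (U : Set X) : Prop :=
  ∃ (x0 : X) (H : C(U × unitInterval, X)),
    (∀ u : U, H (u, 0) = (u : X)) ∧ (∀ u : U, H (u, 1) = x0)

/-- `catLE X n` : `X` has an open cover by `n+1` sets, each contractible in `X`. -/
def catLE (X : Type u) [TopologicalSpace X] (n : ℕ) : Prop :=
  ∃ U : Fin (n + 1) → Set X,
    (∀ i, IsOpen (U i)) ∧ (∀ x, ∃ i, x ∈ U i) ∧ ∀ i, ContractibleIn (U i)

open Set Function Topology ContinuousMap unitInterval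

theorem Quot.apply_eq_apply_of_mk_eq {α β : Type*} {r : α → α → Prop} (P : α → Prop)
    (g : α → β) (hr : ∀ a b, r a b → (P a ↔ P b) ∧ (P a → g a = g b)) {a b : α}
    (h : Quot.mk r a = Quot.mk r b) (ha : P a) : g a = g b := by
  classical
  have hlift := congrArg (Quot.lift (fun x => if P x then some (g x) else none) fun x y hxy => by
    obtain ⟨hP, hg⟩ := hr x y hxy
    by_cases hx : P x
    · simp [hx, hP.mp hx, hg hx]
    · simp [hx, mt hP.mpr hx]) h
  by_cases hb : P b <;> simp_all

theorem ContinuousMap.nullhomotopic_of_forall_apply_eq {X Y : Type*} [TopologicalSpace X]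
    [TopologicalSpace Y] [Nonempty Y] {g : C(X, Y)} (hg : ∀ x x', g x = g x') :
    g.Nullhomotopic := by
  rcases isEmpty_or_nonempty X with hX | ⟨⟨x₀⟩⟩
  · obtain ⟨y⟩ := ‹Nonempty Y›
    exact ⟨y, (ext isEmptyElim : g = const X y) ▸ Homotopic.refl _⟩
  · exact ⟨g x₀, (ext fun x => hg x x₀ : g = const X (g x₀)) ▸ Homotopic.refl _⟩

namespace Topology.IsQuotientMap

variable {Y M Z : Type*} [TopologicalSpace Y] [TopologicalSpace M] [TopologicalSpace Z]
  {q : Y → M} {O : Set M}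

theorem exists_lift_of_isOpen (hq : IsQuotientMap q) (hO : IsOpen O) (g : C(Y, Z))
    (hg : ∀ y y', q y = q y' → q y ∈ O → g y = g y') :
    ∃ g' : C(O, Z), ∀ y (hy : q y ∈ O), g' ⟨q y, hy⟩ = g y := by
  have hq' : IsQuotientMap (⟨O.restrictPreimage q, hq.continuous.restrictPreimage⟩ :
      C(q ⁻¹' O, O)) := hq.restrictPreimage_isOpen hO
  have hfac : FactorsThrough (g.restrict (q ⁻¹' O)) (O.restrictPreimage q) :=
    fun a b hab => hg a b (congrArg Subtype.val hab) a.2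
  exact ⟨hq'.lift _ hfac, fun y hy => DFunLike.congr_fun (hq'.lift_comp _ hfac) ⟨y, hy⟩⟩

theorem homotopic_of_lift (hq : IsQuotientMap q) (hO : IsOpen O) (G : C(Y, C(I, Z)))
    (hG : ∀ y y', q y = q y' → q y ∈ O → G y = G y') {f₀ f₁ : C(O, Z)}
    (h₀ : ∀ y hy, G y 0 = f₀ ⟨q y, hy⟩) (h₁ : ∀ y hy, G y 1 = f₁ ⟨q y, hy⟩) :
    f₀.Homotopic f₁ := by
  obtain ⟨G', hG'⟩ := hq.exists_lift_of_isOpen hO G hG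
  refine ⟨⟨G'.uncurry.comp prodSwap, ?_, ?_⟩⟩
  all_goals
    rintro ⟨x, hx⟩
    obtain ⟨y, rfl⟩ := hq.surjective x
  exacts [(DFunLike.congr_fun (hG' y hx) 0).trans (h₀ y hx),
    (DFunLike.congr_fun (hG' y hx) 1).trans (h₁ y hx)]

end Topology.IsQuotientMap

section

variable {X A : Type u} [TopologicalSpace X] [TopologicalSpace A]

theorem contractibleIn_iff_nullhomotopic {V : Set X} :
    ContractibleIn V ↔ ((ContinuousMap.id X).restrict V).Nullhomotopic := by
  constructor
  · rintro ⟨x₀, H, h₀, h₁⟩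
    exact ⟨x₀, ⟨⟨H.comp prodSwap, h₀, h₁⟩⟩⟩
  · rintro ⟨x₀, ⟨H⟩⟩
    exact ⟨x₀, H.toContinuousMap.comp prodSwap, H.apply_zero, H.apply_one⟩

theorem ContractibleIn.of_homotopic_comp {V : Set X} {U : Set A} (ι : C(A, X)) (r : C(V, U))
    (h : ((ContinuousMap.id X).restrict V).Homotopic
      (ι.comp (((ContinuousMap.id A).restrict U).comp r)))
    (hU : ContractibleIn U) : ContractibleIn V := by
  rw [contractibleIn_iff_nullhomotopic] at hU ⊢
  obtain ⟨x₀, hx₀⟩ := (hU.comp_left r).comp_right ι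
  exact ⟨x₀, h.trans hx₀⟩

theorem catLE_zero_of_contractibleSpace [ContractibleSpace X] : catLE X 0 :=
  ⟨fun _ => univ, fun _ => isOpen_univ, fun _ => ⟨0, trivial⟩, fun _ =>
    contractibleIn_iff_nullhomotopic.mpr
      ((id_nullhomotopic X).comp_left (.restrict univ (.id X)))⟩

theorem catLE.of_comp_homotopic_id {Y : Type u} [TopologicalSpace Y] {n : ℕ} {g : C(X, Y)}
    {s : C(Y, X)} (hsg : (s.comp g).Homotopic (.id X)) (h : catLE Y n) : catLE X n := by
  obtain ⟨U, hUo, hUcov, hUc⟩ := h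
  refine ⟨fun i => g ⁻¹' U i, fun i => (hUo i).preimage g.continuous, fun x => hUcov (g x),
    fun i => (hUc i).of_homotopic_comp s (g.restrictPreimage (U i)) ?_⟩
  exact hsg.symm.comp (.refl ((ContinuousMap.id X).restrict _))

theorem catLE.of_homotopyEquiv {Y : Type u} [TopologicalSpace Y] {n : ℕ}
    (e : ContinuousMap.HomotopyEquiv Y X) (h : catLE Y n) : catLE X n :=
  h.of_comp_homotopic_id e.right_inv

end

namespace MappingCone

variable {K A : Type u}

def heightOf : (K × I) ⊕ A → I := Sum.elim Prod.snd fun _ => 1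

theorem heightOf_eq_of_rel (f : K → A) {x y : (K × I) ⊕ A} :
    ConeRel f x y → heightOf x = heightOf y := by
  rintro (_ | _) <;> rfl

def height (f : K → A) : MappingCone f → I := Quot.lift heightOf fun _ _ => heightOf_eq_of_rel f

theorem apply_eq_of_mk_eq_of_heightOf_pos {f : K → A} {Z : Type*} {g : (K × I) ⊕ A → Z}
    (hg : ∀ k, g (.inl (k, 1)) = g (.inr (f k))) {y y' : (K × I) ⊕ A}
    (h : Quot.mk (ConeRel f) y = Quot.mk _ y') (hy : 0 < heightOf y) : g y = g y' :=
  Quot.apply_eq_apply_of_mk_eq (fun y => 0 < heightOf y) g (by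
    rintro _ _ (⟨k⟩ | ⟨k, k'⟩)
    · exact ⟨Iff.rfl, fun _ => hg k⟩
    · exact ⟨Iff.rfl, fun h => absurd h (lt_irrefl 0)⟩) h hy

theorem apply_eq_of_mk_eq_of_heightOf_lt_one {f : K → A} {Z : Type*} {g : (K × I) ⊕ A → Z}
    (hg : ∀ k k', g (.inl (k, 0)) = g (.inl (k', 0))) {y y' : (K × I) ⊕ A}
    (h : Quot.mk (ConeRel f) y = Quot.mk _ y') (hy : heightOf y < 1) : g y = g y' :=
  Quot.apply_eq_apply_of_mk_eq (fun y => heightOf y < 1) g (by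
    rintro _ _ (⟨k⟩ | ⟨k, k'⟩)
    · exact ⟨Iff.rfl, fun h => absurd h (lt_irrefl 1)⟩
    · exact ⟨Iff.rfl, fun _ => hg k k'⟩) h hy

variable [TopologicalSpace K] [TopologicalSpace A] (f : C(K, A))

theorem continuous_height : Continuous (height f) :=
  continuous_quot_lift _ (continuous_snd.sumElim continuous_const)

def baseIncl : C(A, MappingCone f) := ⟨incl f, continuous_quot_mk.comp continuous_inr⟩

@[simp]
theorem baseIncl_apply (a : A) : baseIncl f a = Quot.mk _ (.inr a) := rfl

theorem exists_homotopic_baseIncl_comp :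
    ∃ ρ : C(height f ⁻¹' Ioi 0, A),
      ((ContinuousMap.id _).restrict _).Homotopic ((baseIncl f).comp ρ) := by
  have hO : IsOpen (height f ⁻¹' Ioi 0) := isOpen_Ioi.preimage (continuous_height f)
  obtain ⟨ρ, hρ⟩ := isQuotientMap_quot_mk.exists_lift_of_isOpen hO
    ⟨Sum.elim (f ∘ Prod.fst) id, (f.continuous.comp continuous_fst).sumElim continuous_id⟩
    fun y y' h hy => apply_eq_of_mk_eq_of_heightOf_pos (fun _ => rfl) h hy
  -- `σ (σ s * σ t) = t + s * (1 - t)` slides `(k, t)` up its cone line to the base point `f k`.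
  refine ⟨ρ, isQuotientMap_quot_mk.homotopic_of_lift hO
    ⟨Sum.elim (ContinuousMap.curry ⟨fun p : (K × I) × I =>
        Quot.mk (ConeRel f) (.inl (p.1.1, σ (σ p.2 * σ p.1.2))), by fun_prop⟩)
      (const' ∘ baseIncl f), ?_⟩ ?_ ?_ ?_⟩
  · exact (ContinuousMap.continuous _).sumElim (const'.continuous.comp (baseIncl f).continuous)
  · refine fun y y' h hy => apply_eq_of_mk_eq_of_heightOf_pos (fun k => ?_) h hy
    ext s
    simpa using Quot.sound (ConeRel.glue k)
  · rintro (⟨k, t⟩ | a) hy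
    · simp
    · rfl
  · rintro (⟨k, t⟩ | a) hy <;> rw [ContinuousMap.comp_apply, hρ]
    · simpa using Quot.sound (ConeRel.glue k)
    · rfl

theorem contractibleIn_height_lt_one [Nonempty A] : ContractibleIn (height f ⁻¹' Iio 1) := by
  have hW : IsOpen (height f ⁻¹' Iio 1) := isOpen_Iio.preimage (continuous_height f)
  let G : C((K × I) ⊕ A, C(I, MappingCone f)) :=
    ⟨Sum.elim (ContinuousMap.curry ⟨fun p : (K × I) × I =>
        Quot.mk (ConeRel f) (.inl (p.1.1, σ p.2 * p.1.2)), by fun_prop⟩) (const' ∘ baseIncl f),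
      (ContinuousMap.continuous _).sumElim (const'.continuous.comp (baseIncl f).continuous)⟩
  have hG : ∀ y y', Quot.mk (ConeRel f) y = Quot.mk _ y' →
      Quot.mk _ y ∈ height f ⁻¹' Iio 1 → G y = G y' := by
    refine fun y y' h hy => apply_eq_of_mk_eq_of_heightOf_lt_one (fun k k' => ?_) h hy
    ext s
    simpa [G] using Quot.sound (ConeRel.apex k k')
  obtain ⟨g₁, hg₁⟩ := isQuotientMap_quot_mk.exists_lift_of_isOpen hW
    ⟨fun y => G y 1, by fun_prop⟩ fun y y' h hy => DFunLike.congr_fun (hG y y' h hy) 1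
  have hhom : ((ContinuousMap.id _).restrict _).Homotopic g₁ := by
    refine isQuotientMap_quot_mk.homotopic_of_lift hW G hG ?_ fun y hy => (hg₁ y hy).symm
    rintro (⟨k, t⟩ | a) hy
    · simp [G]
    · rfl
  have hconst : ∀ x x', g₁ x = g₁ x' := by
    rintro ⟨x, hx⟩ ⟨x', hx'⟩
    obtain ⟨⟨k, t⟩ | a, rfl⟩ := Quot.exists_rep x
    · obtain ⟨⟨k', t'⟩ | a', rfl⟩ := Quot.exists_rep x'
      · rw [hg₁, hg₁]
        simpa [G] using Quot.sound (ConeRel.apex k k')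
      · exact (lt_irrefl (1 : I) hx').elim
    · exact (lt_irrefl (1 : I) hx).elim
  have : Nonempty (MappingCone f) := ⟨baseIncl f (Classical.arbitrary A)⟩
  obtain ⟨x₀, hx₀⟩ := nullhomotopic_of_forall_apply_eq hconst
  exact contractibleIn_iff_nullhomotopic.mpr ⟨x₀, hhom.trans hx₀⟩

theorem catLE_mappingCone {n : ℕ} (hA : catLE A n) : catLE (MappingCone f) (n + 1) := by
  obtain ⟨U, hUo, hUcov, hUc⟩ := hA
  have : Nonempty A := ⟨(hUc 0).choose⟩
  obtain ⟨ρ, hρ⟩ := exists_homotopic_baseIncl_comp f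
  have hO : IsOpen (height f ⁻¹' Ioi 0) := isOpen_Ioi.preimage (continuous_height f)
  let V : Fin (n + 1) → Set (MappingCone f) :=
    fun j => {x | ∃ hx : 0 < height f x, ρ ⟨x, hx⟩ ∈ U j}
  have hVo : ∀ j, IsOpen (V j) := fun j => by
    have := hO.isOpenMap_subtype_val _ ((hUo j).preimage ρ.continuous)
    rwa [Subtype.coe_image] at this
  have hVc : ∀ j, ContractibleIn (V j) := fun j => by
    let ι : C(V j, height f ⁻¹' Ioi 0) :=
      ⟨fun v => ⟨v, v.2.1⟩, continuous_subtype_val.subtype_mk _⟩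
    exact (hUc j).of_homotopic_comp (baseIncl f) ⟨fun v => ⟨ρ (ι v), v.2.2⟩,
      (ρ.continuous.comp ι.continuous).subtype_mk _⟩ (hρ.comp (.refl ι))
  refine ⟨Fin.cons (height f ⁻¹' Iio 1) V,
    Fin.cases (isOpen_Iio.preimage (continuous_height f)) hVo, fun x => ?_,
    Fin.cases (contractibleIn_height_lt_one f) hVc⟩
  by_cases hx : height f x < 1
  · exact ⟨0, hx⟩
  · have hx' : 0 < height f x := zero_lt_one.trans_le (not_lt.mp hx)
    obtain ⟨j, hj⟩ := hUcov (ρ ⟨x, hx'⟩)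
    exact ⟨j.succ, hx', hj⟩

end MappingCone

theorem cat_le_Cat_general (X : Type u) [TopologicalSpace X]
    (m : ℕ) (D : ConeDecomp X m) : catLE X m := by
  have hF : ∀ i : Fin (m + 1), catLE (D.F i) i := by
    intro i
    induction i using Fin.induction with
    | zero =>
      have := D.F0
      exact catLE_zero_of_contractibleSpace
    | succ i ih =>
      exact (MappingCone.catLE_mappingCone (D.h i) ih).of_homotopyEquiv
        (D.cone i).symm.toHomotopyEquiv
  exact (hF (Fin.last m)).of_homotopyEquiv D.equiv

/-- For a connected CW-complex `X`: if `X` admits a cone-decomposition of length `m`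
(`Cat(X) ≤ m`), then `cat(X) ≤ m`; that is, `cat(X) ≤ Cat(X)`. -/
theorem cat_le_Cat (X : Type u) [TopologicalSpace X] [ConnectedSpace X]
    (C : Σ Y : TopCat.{u}, TopCat.CWComplex Y) (hCW : Nonempty ((C.1 : TopCat.{u}) ≃ₜ X))
    (m : ℕ) (D : ConeDecomp X m) : catLE X m :=
  cat_le_Cat_general X m D
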